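/- Consider the transient change model: under measure $\mathbb{P}_v$ with change time $v > m$, the variables $y_n$ for $n < v$ or $n \geq v+m$ are i.i.d. with law $f_0$ and $y_v,\ldots,y_{v+m-1}$ are i.i.d. with law $f_1$, all independent. Let $S_n = \sum_{i=n-m+1}^n y_i$ and $T_F(h) = \inf\{n\geq m: S_n \geq h\}$. Then the worst-case probability of missed detection satisfies $\sup_{v > m} \mathbb{P}_v(T_F(h) \geq v+m \mid T_F(h) \geq v) \leq \mathbb{P}_1(S_m < h)$, where $\mathbb{P}_1(S_m < h)$ is the probability that the sum of $m$ i.i.d. draws from $f_1$ is below $h$. -/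

import Mathlib

/-!
A missed detection up to time `v + m - 1` forces in particular `S_{v+m-1} < h`, so
`P_v(T ≥ v + m | T ≥ v) ≤ P_v(S_{v+m-1} < h | T ≥ v)`. The event `{T ≥ v}` only involves the
pre-change samples `y_1, …, y_{v-1}`, whereas `S_{v+m-1}` is the sum of the `m` post-change
samples; by independence the conditioning can be dropped. Finally `S_{v+m-1}` under `P_v` and
`S_m` under `P_1` are both sums of `m` independent `f_1`-samples, hence have the same law.
-/

open MeasureTheory ProbabilityTheory
open scoped ProbabilityTheory

/-- Moving sum `S n = ∑_{i=n-m+1}^n y i`. -/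
noncomputable def movSum {Ω : Type*} (m : ℕ) (y : ℕ → Ω → ℝ) (n : ℕ) (ω : Ω) : ℝ :=
  ∑ i ∈ Finset.Icc (n + 1 - m) n, y i ω

/-- FMA stopping time `T_F(h) = inf {n ≥ m : S_n ≥ h}` (equal to `⊤` if no such `n`). -/
noncomputable def fmaTime {Ω : Type*} (m : ℕ) (y : ℕ → Ω → ℝ) (h : ℝ) (ω : Ω) : ℕ∞ :=
  sInf ((fun n : ℕ => (n : ℕ∞)) '' {n : ℕ | m ≤ n ∧ h ≤ movSum m y n ω})

section General

variable {Ω : Type*}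

lemma measurable_iSup_comap {ι β : Type*} [MeasurableSpace β] {f : ι → Ω → β} {s : Set ι}
    {i : ι} (hi : i ∈ s) :
    Measurable[⨆ j ∈ s, MeasurableSpace.comap (f j) inferInstance] (f i) :=
  measurable_iff_comap_le.2 <|
    le_iSup₂ (f := fun j (_ : j ∈ s) ↦ MeasurableSpace.comap (f j) inferInstance) i hi

variable [MeasurableSpace Ω]

lemma cond_le_of_subset_of_indepSet {μ : Measure Ω} {A B C : Set Ω}
    (hB : MeasurableSet B) (hAC : A ⊆ C) (hBC : IndepSet B C μ) : μ[A | B] ≤ μ C :=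
  calc μ[A | B] = (μ B)⁻¹ * μ (B ∩ A) := cond_apply hB μ A
    _ ≤ (μ B)⁻¹ * μ (B ∩ C) := by gcongr
    _ = (μ B)⁻¹ * μ B * μ C := by rw [hBC.measure_inter_eq_mul, mul_assoc]
    _ ≤ μ C := mul_le_of_le_one_left' (ENNReal.inv_mul_le_one _)

lemma identDistrib_pi_of_iIndepFun {Ω' ι : Type*} [MeasurableSpace Ω'] [Fintype ι]
    {β : ι → Type*} [∀ i, MeasurableSpace (β i)] {f : ∀ i, Ω → β i} {g : ∀ i, Ω' → β i}
    {μ : Measure Ω} {ν : Measure Ω'} (hfm : ∀ i, AEMeasurable (f i) μ)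
    (hgm : ∀ i, AEMeasurable (g i) ν) (hf : iIndepFun f μ) (hg : iIndepFun g ν)
    (hfg : ∀ i, μ.map (f i) = ν.map (g i)) :
    IdentDistrib (fun ω i ↦ f i ω) (fun ω i ↦ g i ω) μ ν where
  aemeasurable_fst := aemeasurable_pi_lambda _ hfm
  aemeasurable_snd := aemeasurable_pi_lambda _ hgm
  map_eq := by rw [hf.map_fun_eq_pi_map hfm, hg.map_fun_eq_pi_map hgm, funext hfg]

end General

section MovingSum

variable {Ω : Type*} {m : ℕ} {y : ℕ → Ω → ℝ} {h : ℝ}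

lemma le_fmaTime_iff {v : ℕ} {ω : Ω} :
    (v : ℕ∞) ≤ fmaTime m y h ω ↔ ∀ n, m ≤ n → n < v → movSum m y n ω < h := by
  simp only [fmaTime, le_sInf_iff, Set.forall_mem_image, Set.mem_ofPred_eq, Nat.cast_le]
  refine ⟨fun H n hmn hnv ↦ ?_, fun H n ⟨hmn, hn⟩ ↦ ?_⟩
  · by_contra! hge
    exact absurd (H ⟨hmn, hge⟩) (by omega)
  · by_contra! hnv
    exact absurd hn (not_le.2 (H n hmn hnv))

lemma movSum_lt_of_le_fmaTime {v : ℕ} {ω : Ω} (hv : 1 ≤ v)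
    (hω : ((v + m : ℕ) : ℕ∞) ≤ fmaTime m y h ω) : movSum m y (v + m - 1) ω < h :=
  le_fmaTime_iff.1 hω _ (by omega) (by omega)

lemma movSum_eq_sum_fin {v : ℕ} (hv : 1 ≤ v) :
    movSum m y (v + m - 1) = fun ω ↦ ∑ i : Fin m, y (v + i) ω := by
  have hwindow : Finset.Icc (v + m - 1 + 1 - m) (v + m - 1) = Finset.Ico v (v + m) :=
    Finset.ext fun n ↦ by simp only [Finset.mem_Icc, Finset.mem_Ico]; omega
  funext ω
  rw [movSum, hwindow, Finset.sum_Ico_eq_sum_range, Nat.add_sub_cancel_left,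
    ← Fin.sum_univ_eq_sum_range]

lemma measurable_movSum {mΩ : MeasurableSpace Ω} {n : ℕ}
    (hy : ∀ i, n + 1 - m ≤ i → i ≤ n → Measurable[mΩ] (y i)) :
    Measurable[mΩ] (movSum m y n) :=
  Finset.measurable_sum _ fun i hi ↦ (Finset.mem_Icc.1 hi).elim (hy i)

lemma measurableSet_le_fmaTime {mΩ : MeasurableSpace Ω} {v : ℕ}
    (hy : ∀ i < v, Measurable[mΩ] (y i)) :
    MeasurableSet[mΩ] {ω | (v : ℕ∞) ≤ fmaTime m y h ω} := by
  simp only [le_fmaTime_iff, Set.ofPred_forall]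
  exact .iInter fun n ↦ .iInter fun _ ↦ .iInter fun hnv ↦
    measurableSet_lt (measurable_movSum fun i _ hin ↦ hy i (by omega)) measurable_const

variable [MeasurableSpace Ω]

lemma indepSet_le_fmaTime_movSum_lt {μ : Measure Ω} (hmeas : ∀ i, Measurable (y i))
    (hindep : iIndepFun y μ) {v : ℕ} (hv : 1 ≤ v) :
    IndepSet {ω | (v : ℕ∞) ≤ fmaTime m y h ω} {ω | movSum m y (v + m - 1) ω < h} μ := by
  have hpast_future := indep_iSup_of_disjoint (fun i ↦ (hmeas i).comap_le) hindep.iIndep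
    (Set.Iio_disjoint_Ici (le_refl v))
  refine hpast_future.indepSet_of_measurableSet ?_ ?_
  · exact measurableSet_le_fmaTime fun i hi ↦ measurable_iSup_comap hi
  · exact measurableSet_lt
      (measurable_movSum fun i hi _ ↦ measurable_iSup_comap (Set.mem_Ici.2 (by omega)))
      measurable_const

lemma identDistrib_movSum {Ω' : Type*} [MeasurableSpace Ω'] {z : ℕ → Ω' → ℝ}
    {μ : Measure Ω} {ν : Measure Ω'} (hy : ∀ i, Measurable (y i)) (hz : ∀ i, Measurable (z i))
    (hyμ : iIndepFun y μ) (hzν : iIndepFun z ν) {v w : ℕ} (hv : 1 ≤ v) (hw : 1 ≤ w)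
    (hlaw : ∀ i : Fin m, μ.map (y (v + i)) = ν.map (z (w + i))) :
    IdentDistrib (movSum m y (v + m - 1)) (movSum m z (w + m - 1)) μ ν := by
  have hblock := identDistrib_pi_of_iIndepFun (fun i ↦ (hy _).aemeasurable)
    (fun i ↦ (hz _).aemeasurable) (hyμ.precomp ((add_right_injective v).comp Fin.val_injective))
    (hzν.precomp ((add_right_injective w).comp Fin.val_injective)) hlaw
  rw [movSum_eq_sum_fin hv, movSum_eq_sum_fin hw]
  exact hblock.comp (Finset.measurable_sum _ fun i _ ↦ measurable_pi_apply i)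

end MovingSum

theorem fma_missed_detection_bound_general {Ω : Type*} [MeasurableSpace Ω]
    (m : ℕ) (y : ℕ → Ω → ℝ)
    (hmeas : ∀ i, Measurable (y i))
    (μ1 : Measure ℝ)
    (P : ℕ → Measure Ω)
    (hindep : ∀ v, iIndepFun y (P v))
    (hpost : ∀ v n, 1 ≤ v → v ≤ n → n < v + m → Measure.map (y n) (P v) = μ1)
    (h : ℝ) :
    (⨆ (v : ℕ) (_ : m < v),
        (P v)[{ω | ((v + m : ℕ) : ℕ∞) ≤ fmaTime m y h ω} |
              {ω | ((v : ℕ) : ℕ∞) ≤ fmaTime m y h ω}])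
      ≤ (P 1) {ω | movSum m y m ω < h} := by
  refine iSup₂_le fun v hmv ↦ ?_
  have hv : 1 ≤ v := by omega
  have hlaw (i : Fin m) : (P v).map (y (v + i)) = (P 1).map (y (1 + i)) := by
    rw [hpost v _ hv (by omega) (by omega), hpost 1 _ le_rfl (by omega) (by omega)]
  calc _ ≤ P v {ω | movSum m y (v + m - 1) ω < h} :=
        cond_le_of_subset_of_indepSet (measurableSet_le_fmaTime fun i _ ↦ hmeas i)
          (fun _ ↦ movSum_lt_of_le_fmaTime hv) (indepSet_le_fmaTime_movSum_lt hmeas (hindep v) hv)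
    _ = P 1 {ω | movSum m y (1 + m - 1) ω < h} :=
        (identDistrib_movSum hmeas hmeas (hindep v) (hindep 1) hv le_rfl hlaw).measure_mem_eq
          measurableSet_Iio
    _ = P 1 {ω | movSum m y m ω < h} := by rw [Nat.add_sub_cancel_left]

/-- in the transient change model (under `P v` the samples
`y v, …, y (v+m-1)` have the post-change law `μ1` and all other samples the
pre-change law `μ0`, all independent), the worst-case probability of missed
detection of the FMA stopping time is bounded by `P_1(S_m < h)`. -/
theorem fma_missed_detection_bound {Ω : Type*} [MeasurableSpace Ω]
    (m : ℕ) (hm : 1 ≤ m) (y : ℕ → Ω → ℝ)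
    (hmeas : ∀ i, Measurable (y i))
    (μ0 μ1 : Measure ℝ) [IsProbabilityMeasure μ0] [IsProbabilityMeasure μ1]
    (hμ : μ0 ≠ μ1)
    (P : ℕ → Measure Ω) (hP : ∀ v, IsProbabilityMeasure (P v))
    (hindep : ∀ v, iIndepFun y (P v))
    (hpre : ∀ v n, 1 ≤ v → (n < v ∨ v + m ≤ n) → Measure.map (y n) (P v) = μ0)
    (hpost : ∀ v n, 1 ≤ v → v ≤ n → n < v + m → Measure.map (y n) (P v) = μ1)
    (h : ℝ) :
    (⨆ (v : ℕ) (_ : m < v),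
        (P v)[{ω | ((v + m : ℕ) : ℕ∞) ≤ fmaTime m y h ω} |
              {ω | ((v : ℕ) : ℕ∞) ≤ fmaTime m y h ω}])
      ≤ (P 1) {ω | movSum m y m ω < h} :=
  fma_missed_detection_bound_general m y hmeas μ1 P hindep hpost h
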